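/- arXiv:2405.08723 — 2 statements merged into one kernel-verified Lean document; each statement's English description precedes it below -/
import Mathlib

section
/- Let p be a prime and n a natural number with p ≤ n and a₀ := n % p ≥ 2. Then the binomial coefficient C(n−1, n−a₀) is congruent to 1 modulo p, and C(n−1, n−a₀) > 1. (In particular C(n−1, n−a₀) is not divisible by p.) -/
/-!
Write `n = p q + a₀` with `q ≥ 1` and `2 ≤ a₀ < p`. Then `n - 1 = p q + (a₀ - 1)` and `n - a₀ = p q`,
so by Lucas' theorem `C(n - 1, n - a₀) ≡ C(a₀ - 1, 0) · C(q, q) = 1 (mod p)`. Since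
`0 < n - a₀ < n - 1`, the binomial coefficient is not an end of its row of Pascal's triangle,
hence exceeds `1`.
-/

namespace Nat

theorem one_lt_choose {n k : ℕ} (hk : 0 < k) (hkn : k < n) : 1 < n.choose k := by
  obtain ⟨m, rfl⟩ : ∃ m, n = m + 1 := ⟨n - 1, by omega⟩
  obtain ⟨j, rfl⟩ : ∃ j, k = j + 1 := ⟨k - 1, by omega⟩
  rw [choose_succ_succ']
  have := choose_pos (n := m) (k := j) (by omega)
  have := choose_pos (n := m) (k := j + 1) (by omega)
  omega

theorem choose_mul_add_modEq_one {p : ℕ} [Fact p.Prime] (q : ℕ) {r : ℕ} (hr : r < p) :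
    (p * q + r).choose (p * q) ≡ 1 [MOD p] := by
  have hp := (Fact.out : p.Prime).pos
  have lucas := Choose.choose_modEq_choose_mod_mul_choose_div_nat (n := p * q + r) (k := p * q)
    (p := p)
  rwa [mul_add_mod, mod_eq_of_lt hr, mul_mod_right, mul_add_div hp, div_eq_of_lt hr,
    mul_div_cancel_left₀ _ hp.ne', add_zero, choose_zero_right, choose_self, one_mul] at lucas

end Nat

/-- Let `p` be a prime and `n` a natural number with `p ≤ n` and `a₀ := n % p ≥ 2`.
Then `C(n-1, n-a₀) ≡ 1 (mod p)` and `C(n-1, n-a₀) > 1`. -/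
theorem stmt0 (p n : ℕ) (hp : p.Prime) (hpn : p ≤ n) (ha : 2 ≤ n % p) :
    Nat.choose (n - 1) (n - n % p) ≡ 1 [MOD p] ∧ 1 < Nat.choose (n - 1) (n - n % p) := by
  have : Fact p.Prime := ⟨hp⟩
  have hap : n % p < p := Nat.mod_lt _ hp.pos
  have hq : 1 ≤ n / p := (Nat.one_le_div_iff hp.pos).mpr hpn
  have hn := Nat.div_add_mod n p
  have h_top : n - 1 = p * (n / p) + (n % p - 1) := by omega
  have h_bot : n - n % p = p * (n / p) := by omega
  refine ⟨?_, Nat.one_lt_choose ?_ ?_⟩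
  · rw [h_top, h_bot]
    exact Nat.choose_mul_add_modEq_one _ (by omega)
  · rw [h_bot]; exact Nat.mul_pos hp.pos hq
  · omega
end

section
/- Let G be a finite group, p a prime, P a Sylow p-subgroup of G, and N a normal subgroup of G whose order is not divisible by p. Suppose that the image P̄ = PN/N of P in Ḡ = G/N is self-normalizing, i.e. N_Ḡ(P̄) = P̄. Then N_G(P) = P · (C_G(P) ∩ N), the subgroups P and C_G(P) ∩ N have trivial intersection, and every element of C_G(P) ∩ N commutes with every element of P; that is, N_G(P) is the internal direct product N_G(P) = P × (C_G(P) ∩ N). -/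
/-- Let `G` be a finite group, `p` a prime, `P` a Sylow `p`-subgroup of `G`, and
`N ⊴ G` with `p ∤ |N|`. If the image of `P` in `G/N` is self-normalizing, then
`N_G(P) = P · (C_G(P) ⊓ N)`, the two factors intersect trivially, and elements of the
two factors commute; i.e. `N_G(P) = P × (C_G(P) ⊓ N)`. -/
theorem stmt6 {G : Type*} [Group G] [Finite G] (p : ℕ) (hp : p.Prime)
    (P : Sylow p G) (N : Subgroup G) (hN : N.Normal) (hNp : ¬ p ∣ Nat.card N)
    (hself : Subgroup.normalizer (((P : Subgroup G).map (QuotientGroup.mk' N) : Subgroup (G ⧸ N)) : Set (G ⧸ N))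
      = (P : Subgroup G).map (QuotientGroup.mk' N)) :
    Subgroup.normalizer ((P : Subgroup G) : Set G)
        = (P : Subgroup G) ⊔ (Subgroup.centralizer (P : Set G) ⊓ N) ∧
      (P : Subgroup G) ⊓ (Subgroup.centralizer (P : Set G) ⊓ N) = ⊥ ∧
      ∀ x ∈ Subgroup.centralizer (P : Set G) ⊓ N, ∀ u ∈ (P : Subgroup G),
        Commute x u := by
  haveI : Fact p.Prime := ⟨hp⟩
  -- P ⊓ N = ⊥, since P ⊓ N is a p-group inside the p'-group N
  have hPN : (P : Subgroup G) ⊓ N = ⊥ := by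
    have hpg : IsPGroup p ((P : Subgroup G) ⊓ N : Subgroup G) := P.2.to_inf_left
    obtain ⟨n, hn⟩ := hpg.exists_card_eq
    have hdvd : Nat.card ((P : Subgroup G) ⊓ N : Subgroup G) ∣ Nat.card N :=
      Subgroup.card_dvd_of_le inf_le_right
    rcases Nat.eq_zero_or_pos n with rfl | hn0
    · exact Subgroup.eq_bot_of_card_eq _ (by simpa using hn)
    · exact absurd ((dvd_pow_self p hn0.ne').trans (hn ▸ hdvd)) hNp
  -- elements of N that normalize P centralize P
  have hcent : ∀ x : G, x ∈ N → x ∈ Subgroup.normalizer ((P : Subgroup G) : Set G) →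
      x ∈ Subgroup.centralizer (P : Set G) := by
    intro x hxN hxn
    rw [Subgroup.mem_centralizer_iff]
    intro u hu
    have h1 : x⁻¹ * u⁻¹ * x ∈ (P : Subgroup G) := by
      have := (Subgroup.mem_normalizer_iff.mp (inv_mem hxn) u⁻¹).mp (inv_mem hu)
      simpa [mul_assoc] using this
    have hc : x⁻¹ * u⁻¹ * x * u ∈ (P : Subgroup G) ⊓ N := by
      refine ⟨mul_mem h1 hu, ?_⟩
      have h2 : u⁻¹ * x * u ∈ N := by
        have := hN.conj_mem x hxN u⁻¹
        simpa [mul_assoc] using this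
      have := mul_mem (inv_mem hxN) h2
      simpa [mul_assoc] using this
    rw [hPN, Subgroup.mem_bot] at hc
    calc u * x = u * x * (x⁻¹ * u⁻¹ * x * u) := by rw [hc, mul_one]
    _ = x * u := by group
  -- the centralizer of P is contained in the normalizer of P
  have hcn : Subgroup.centralizer (P : Set G) ≤ Subgroup.normalizer ((P : Subgroup G) : Set G) := by
    intro x hx
    rw [Subgroup.mem_normalizer_iff]
    intro h
    constructor
    · intro hh
      have hcomm := Subgroup.mem_centralizer_iff.mp hx h hh
      have heq : x * h * x⁻¹ = h := by rw [← hcomm]; group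
      rw [heq]; exact hh
    · intro hh
      have hcomm := Subgroup.mem_centralizer_iff.mp hx _ hh
      have h1 : x * h = x * (x * h * x⁻¹) := by
        calc x * h = x * h * x⁻¹ * x := by group
        _ = x * (x * h * x⁻¹) := hcomm
      have heq : h = x * h * x⁻¹ := mul_left_cancel h1
      rw [heq]; exact hh
  constructor
  · apply le_antisymm
    · intro g hg
      -- the image of g normalizes the image of P, hence lies in the image of P
      have hg' : QuotientGroup.mk' N g ∈
          Subgroup.normalizer (((P : Subgroup G).map (QuotientGroup.mk' N) : Subgroup (G ⧸ N)) : Set (G ⧸ N)) := by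
        apply Subgroup.le_normalizer_map (QuotientGroup.mk' N)
        exact ⟨g, hg, rfl⟩
      rw [hself] at hg'
      obtain ⟨u, hu, hug⟩ := hg'
      have hnN : u⁻¹ * g ∈ N := by
        have : ((u : G) : G ⧸ N) = (g : G ⧸ N) := hug
        rwa [QuotientGroup.eq] at this
      have hnNorm : u⁻¹ * g ∈ Subgroup.normalizer ((P : Subgroup G) : Set G) :=
        mul_mem (inv_mem (Subgroup.le_normalizer hu)) hg
      have hnC : u⁻¹ * g ∈ Subgroup.centralizer (P : Set G) := hcent _ hnN hnNorm
      have : g = u * (u⁻¹ * g) := by group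
      rw [this]
      exact mul_mem (Subgroup.mem_sup_left hu) (Subgroup.mem_sup_right ⟨hnC, hnN⟩)
    · refine sup_le Subgroup.le_normalizer ?_
      exact le_trans inf_le_left hcn
  constructor
  · rw [eq_bot_iff, ← hPN]
    exact le_inf inf_le_left (le_trans inf_le_right inf_le_right)
  · intro x hx u hu
    exact (Subgroup.mem_centralizer_iff.mp hx.1 u hu).symm
end
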